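/- arXiv:2408.11755 — 5 statements merged into one kernel-verified Lean document; each statement's English description precedes it below -/
import Mathlib

section
/- Let c, c_l be real numbers (candidate locations), let v be a real number (voter location) with |v - c_l| ≤ |v - c|, and let C1 be a finite set of n1 ≥ 1 voters (real numbers) containing v. Then the sum over x in C1 of |x - c_l| is at most (2·n1 - 1) times the sum over x in C1 of |x - c|. -/
open Finset

section

variable {α : Type*} [PseudoMetricSpace α]

theorem dist_le_dist_add_two_mul_dist_of_dist_le {x v c cl : α}
    (hvd : dist v cl ≤ dist v c) : dist x cl ≤ dist x c + 2 * dist v c := by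
  calc dist x cl ≤ dist x v + dist v cl := dist_triangle _ _ _
    _ ≤ (dist x c + dist c v) + dist v c := by gcongr; exact dist_triangle _ _ _
    _ = dist x c + 2 * dist v c := by rw [dist_comm c v]; ring

/-- Every voter other than `v` pays at most `2 · dist v c` extra, and `dist v c` is itself
bounded by the total cost of `c`. -/
theorem sum_dist_le_two_mul_card_sub_one_mul_sum_dist {s : Finset α} {v c cl : α}
    (hv : v ∈ s) (hvd : dist v cl ≤ dist v c) :
    ∑ x ∈ s, dist x cl ≤ (2 * (#s : ℝ) - 1) * ∑ x ∈ s, dist x c := by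
  classical
  set opt := ∑ x ∈ s, dist x c
  have hv_le_opt : dist v c ≤ opt :=
    single_le_sum (f := fun x => dist x c) (fun _ _ => dist_nonneg) hv
  have hcard : (#(s.erase v) : ℝ) = #s - 1 := by
    rw [card_erase_of_mem hv, Nat.cast_pred (card_pos.mpr ⟨v, hv⟩)]
  calc ∑ x ∈ s, dist x cl = dist v cl + ∑ x ∈ s.erase v, dist x cl :=
        (add_sum_erase s _ hv).symm
    _ ≤ dist v c + ∑ x ∈ s.erase v, (dist x c + 2 * dist v c) := by
        gcongr with x
        exact dist_le_dist_add_two_mul_dist_of_dist_le hvd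
    _ = opt + 2 * (#s - 1) * dist v c := by
        rw [sum_add_distrib, sum_const, nsmul_eq_mul, hcard, ← add_assoc,
          add_sum_erase s (fun x => dist x c) hv]
        ring
    _ ≤ opt + 2 * (#s - 1) * opt := by gcongr; rw [← hcard]; positivity
    _ = (2 * (#s : ℝ) - 1) * opt := by ring

end

/-- electing `cl` instead of `c` for a cluster `C1` containing a voter `v`
with `|v - cl| ≤ |v - c|` costs at most `(2·n1 - 1)` times the cost of `c`. -/
theorem stmt0 (c cl v : ℝ) (C1 : Finset ℝ) (hv : v ∈ C1)
    (hvd : |v - cl| ≤ |v - c|) :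
    ∑ x ∈ C1, |x - cl| ≤ (2 * (C1.card : ℝ) - 1) * ∑ x ∈ C1, |x - c| := by
  simp only [← Real.dist_eq] at hvd ⊢
  exact sum_dist_le_two_mul_card_sub_one_mul_sum_dist hv hvd
end

section
/- Let (X,d) be a metric space, V a finite set of voters, C a set of candidates, S* ⊆ C an optimal k-committee (minimizing egalitarian cost EC), and S ⊆ C a committee such that max_{v∈V} d(top(v), S) ≤ β · max_{v∈V} d(top(v), S*), where top(v) is a nearest candidate to v in C. Then EC(S) ≤ (1 + 2β)·EC(S*). -/
/-- if `S` is β-approximate wrt. the egalitarian cost on the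
candidate-restricted instance (voters moved to their top candidates in `C`),
then `EC(S) ≤ (1 + 2β)·EC(S*)` for the original instance, where `S* ⊆ C`. -/
theorem stmt4 {X : Type*} [MetricSpace X] (V C S Sstar : Finset X)
    (hV : V.Nonempty) (hC : C.Nonempty) (hS : S.Nonempty) (hSs : Sstar.Nonempty)
    (hSC : S ⊆ C) (hSsC : Sstar ⊆ C) (top : X → X)
    (htop : ∀ v ∈ V, top v ∈ C ∧ dist v (top v) = C.inf' hC fun c => dist v c)
    (β : ℝ) (hβ : 0 ≤ β)
    (happrox : (V.sup' hV fun v => S.inf' hS fun c => dist (top v) c) ≤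
      β * V.sup' hV fun v => Sstar.inf' hSs fun c => dist (top v) c) :
    (V.sup' hV fun v => S.inf' hS fun c => dist v c) ≤
      (1 + 2 * β) * V.sup' hV fun v => Sstar.inf' hSs fun c => dist v c := by
  set A : ℝ := V.sup' hV fun v => Sstar.inf' hSs fun c => dist v c with hA
  -- d(v, top v) ≤ inf_{S*} d(v,·) for v ∈ V
  have hkey : ∀ v ∈ V, dist v (top v) ≤ Sstar.inf' hSs fun c => dist v c := by
    intro v hv
    rw [(htop v hv).2]
    obtain ⟨cstar, hcs, hcseq⟩ := Finset.exists_mem_eq_inf' hSs (fun c => dist v c)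
    rw [hcseq]
    exact Finset.inf'_le _ (hSsC hcs)
  -- sup_V inf_{S*} d(top v,·) ≤ 2A
  have h2A : (V.sup' hV fun v => Sstar.inf' hSs fun c => dist (top v) c) ≤ 2 * A := by
    apply Finset.sup'_le
    intro v hv
    obtain ⟨cstar, hcs, hcseq⟩ := Finset.exists_mem_eq_inf' hSs (fun c => dist v c)
    calc (Sstar.inf' hSs fun c => dist (top v) c) ≤ dist (top v) cstar :=
          Finset.inf'_le _ hcs
      _ ≤ dist (top v) v + dist v cstar := dist_triangle _ _ _
      _ = dist v (top v) + (Sstar.inf' hSs fun c => dist v c) := by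
          rw [dist_comm, hcseq]
      _ ≤ (Sstar.inf' hSs fun c => dist v c) + (Sstar.inf' hSs fun c => dist v c) := by
          have := hkey v hv; linarith
      _ ≤ A + A := by
          have : (Sstar.inf' hSs fun c => dist v c) ≤ A :=
            Finset.le_sup' (fun w => Sstar.inf' hSs fun c => dist w c) hv
          linarith
      _ = 2 * A := by ring
  apply Finset.sup'_le
  intro v hv
  obtain ⟨cs, hcs, hcseq⟩ := Finset.exists_mem_eq_inf' hS (fun c => dist (top v) c)
  have h1 : (S.inf' hS fun c => dist v c) ≤ dist v cs := Finset.inf'_le _ hcs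
  have h2 : dist v cs ≤ dist v (top v) + dist (top v) cs := dist_triangle _ _ _
  have h3 : dist v (top v) ≤ A :=
    le_trans (hkey v hv) (Finset.le_sup' (fun v => Sstar.inf' hSs fun c => dist v c) hv)
  have h4 : dist (top v) cs ≤ V.sup' hV fun v => S.inf' hS fun c => dist (top v) c := by
    rw [← hcseq] at *
    exact Finset.le_sup' (fun v => S.inf' hS fun c => dist (top v) c) hv
  have h5 : (V.sup' hV fun v => S.inf' hS fun c => dist (top v) c) ≤ β * (2 * A) := by
    calc _ ≤ β * V.sup' hV fun v => Sstar.inf' hSs fun c => dist (top v) c := happrox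
      _ ≤ β * (2 * A) := by exact mul_le_mul_of_nonneg_left h2A hβ
  nlinarith
end

section
/- Let c < c' be reals, F ⊆ [c,c'] finite with c, c' ∈ F, and let c_l be the rightmost element of F strictly below μ = (c+c')/2 and c_r the leftmost element strictly above μ (assume μ ∉ F and both exist). Then [c, c_l] and [c_r, c'] cover F (i.e., every element of F lies in one of them), the two intervals are disjoint, and max(c_l - c, c' - c_r) ≤ (c' - c)/2. -/
/-- splitting the candidate interval `F ⊆ [c,c']` at the midpoint into
`[c,cl]` and `[cr,c']` covers all candidates, the two intervals are disjoint, and each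
has length at most half of `c' - c`. -/
theorem stmt7 (c c' μ cl cr : ℝ) (F : Finset ℝ) (hcc : c < c')
    (hF : ↑F ⊆ Set.Icc c c') (hcF : c ∈ F) (hc'F : c' ∈ F)
    (hμdef : μ = (c + c') / 2) (hnμ : ∀ x ∈ F, x ≠ μ)
    (hclF : cl ∈ F) (hcl : cl < μ) (hclmax : ∀ x ∈ F, x < μ → x ≤ cl)
    (hcrF : cr ∈ F) (hcr : μ < cr) (hcrmin : ∀ x ∈ F, μ < x → cr ≤ x) :
    (∀ x ∈ F, x ∈ Set.Icc c cl ∨ x ∈ Set.Icc cr c') ∧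
      Disjoint (Set.Icc c cl) (Set.Icc cr c') ∧
      max (cl - c) (c' - cr) ≤ (c' - c) / 2 := by
  refine ⟨fun x hx => ?_, ?_, ?_⟩
  · have hxI := hF hx
    rcases lt_trichotomy x μ with h | h | h
    · exact Or.inl ⟨hxI.1, hclmax x hx h⟩
    · exact absurd h (hnμ x hx)
    · exact Or.inr ⟨hcrmin x hx h, hxI.2⟩
  · apply Set.disjoint_left.2
    rintro x ⟨_, h1⟩ ⟨h2, _⟩
    linarith
  · have h1 := (hF hclF).1
    have h2 := (hF hcrF).2
    exact max_le (by linarith) (by linarith)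
end

section
/- Let S* be a set of k points on the real line and let I be a family of pairwise disjoint intervals, each of length in (L, 2L] for some L > 0, such that each interval [a,b] ∈ I is 'close': min over s ∈ S* of min(|a - s|, |b - s|) < b - a. Then |I| ≤ 5k. -/
/-- a family of pairwise disjoint intervals of length in `(L, 2L]`, each
`close' to a set `S*` of `k` points (some endpoint within distance `< length` of `S*`),
has at most `5k` members. -/
theorem stmt9 (k : ℕ) (Sstar : Finset ℝ) (hk : Sstar.card = k) (L : ℝ) (hL : 0 < L)
    (I : Finset (ℝ × ℝ))
    (hlen : ∀ p ∈ I, L < p.2 - p.1 ∧ p.2 - p.1 ≤ 2 * L)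
    (hdisj : ∀ p ∈ I, ∀ q ∈ I, p ≠ q → Disjoint (Set.Icc p.1 p.2) (Set.Icc q.1 q.2))
    (hclose : ∀ p ∈ I, ∃ s ∈ Sstar, min |p.1 - s| |p.2 - s| < p.2 - p.1) :
    I.card ≤ 5 * k := by
  classical
  by_contra hcon
  push_neg at hcon
  -- choice function picking a close point for each interval
  set f : ℝ × ℝ → ℝ := fun p =>
    if h : ∃ s ∈ Sstar, min |p.1 - s| |p.2 - s| < p.2 - p.1 then h.choose else 0 with hf
  have hmaps : ∀ p ∈ I, f p ∈ Sstar := by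
    intro p hp
    have h := hclose p hp
    simp only [hf, dif_pos h]
    exact h.choose_spec.1
  have hfc : ∀ p ∈ I, min |p.1 - f p| |p.2 - f p| < p.2 - p.1 := by
    intro p hp
    have h := hclose p hp
    simp only [hf, dif_pos h]
    exact h.choose_spec.2
  have hlt : Sstar.card * 5 < I.card := by rw [hk]; omega
  obtain ⟨s, hs, h5⟩ := Finset.exists_lt_card_fiber_of_mul_lt_card_of_maps_to hmaps hlt
  set T : Finset (ℝ × ℝ) := I.filter (fun p => f p = s) with hT
  have hTI : ∀ p ∈ T, p ∈ I := fun p hp => (Finset.mem_filter.mp hp).1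
  have hTf : ∀ p ∈ T, f p = s := fun p hp => (Finset.mem_filter.mp hp).2
  have hT6 : 6 ≤ T.card := h5
  -- first coordinates are distinct on T
  have hinj : ∀ p ∈ T, ∀ q ∈ T, p.1 = q.1 → p = q := by
    intro p hp q hq hpq
    by_contra hne
    have hd := hdisj p (hTI p hp) q (hTI q hq) hne
    have hp1 : p.1 ∈ Set.Icc p.1 p.2 := by
      have := hlen p (hTI p hp); constructor <;> [exact le_refl _; linarith [this.1]]
    have hq1 : p.1 ∈ Set.Icc q.1 q.2 := by
      have := hlen q (hTI q hq)
      constructor <;> [exact le_of_eq hpq.symm; · rw [hpq]; linarith [this.1]]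
    exact (Set.disjoint_left.mp hd hp1) hq1
  have hcardA : (T.image Prod.fst).card = T.card :=
    Finset.card_image_of_injOn (fun p hp q hq h => hinj p hp q hq h)
  obtain ⟨B, hBA, hB6⟩ := Finset.exists_subset_card_eq (by omega :
    6 ≤ (T.image Prod.fst).card)
  set g := B.orderIsoOfFin hB6 with hg
  set x : Fin 6 → ℝ := fun i => (g i : ℝ) with hxdef
  have hxmono : StrictMono x := fun i j h => Subtype.coe_lt_coe.mpr (g.strictMono h)
  have hx : ∀ i : Fin 6, ∃ p, p ∈ T ∧ p.1 = x i := by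
    intro i
    have : x i ∈ T.image Prod.fst := hBA (g i).2
    obtain ⟨p, hp, hpx⟩ := Finset.mem_image.mp this
    exact ⟨p, hp, hpx⟩
  choose P hPT hPx using hx
  set a : Fin 6 → ℝ := fun i => (P i).1 with ha
  set b : Fin 6 → ℝ := fun i => (P i).2 with hb
  have hamono : ∀ i j : Fin 6, i < j → a i < a j := by
    intro i j h
    simp only [ha, hPx]
    exact hxmono h
  have hlen' : ∀ i : Fin 6, L < b i - a i ∧ b i - a i ≤ 2 * L :=
    fun i => hlen (P i) (hTI _ (hPT i))
  -- disjointness chain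
  have hC : ∀ i j : Fin 6, i < j → b i < a j := by
    intro i j h
    by_contra hc
    push_neg at hc
    have hne : P i ≠ P j := by
      intro he
      have h2 := hamono i j h
      simp only [ha, he, lt_self_iff_false] at h2
    have hd := hdisj (P i) (hTI _ (hPT i)) (P j) (hTI _ (hPT j)) hne
    have h1 : a j ∈ Set.Icc (P i).1 (P i).2 := ⟨le_of_lt (hamono i j h), hc⟩
    have h2 : a j ∈ Set.Icc (P j).1 (P j).2 :=
      ⟨le_refl _, by linarith [(hlen' j).1]⟩
    exact (Set.disjoint_left.mp hd h1) h2
  -- close endpoints for intervals 0 and 5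
  have hcl : ∀ i : Fin 6, min |a i - s| |b i - s| < b i - a i := by
    intro i
    have := hfc (P i) (hTI _ (hPT i))
    rwa [hTf (P i) (hPT i)] at this
  have h05 : ∀ i : Fin 6, ∃ e, a i ≤ e ∧ e ≤ b i ∧ |e - s| < 2 * L := by
    intro i
    rcases min_lt_iff.mp (hcl i) with h | h
    · exact ⟨a i, le_refl _, by linarith [(hlen' i).1], lt_of_lt_of_le h (hlen' i).2⟩
    · exact ⟨b i, by linarith [(hlen' i).1], le_refl _, lt_of_lt_of_le h (hlen' i).2⟩
  obtain ⟨e0, _, he0b, he0⟩ := h05 0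
  obtain ⟨e5, he5a, _, he5⟩ := h05 5
  rw [abs_lt] at he0 he5
  have c01 := hC 0 1 (by decide)
  have c12 := hC 1 2 (by decide)
  have c23 := hC 2 3 (by decide)
  have c34 := hC 3 4 (by decide)
  have c45 := hC 4 5 (by decide)
  have l1 := (hlen' 1).1
  have l2 := (hlen' 2).1
  have l3 := (hlen' 3).1
  have l4 := (hlen' 4).1
  linarith
end

section
/- Let p, q be points in a metric space and V a finite set of voters such that at least half of the voters are (weakly) closer to p than to q. Then Σ_{v∈V} d(v, p) ≤ 3 · Σ_{v∈V} d(v, q). -/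
/-! Voters weakly closer to `p` pay at most their distance to `q`; every other voter pays at most
`d(v, q) + d(p, q)`. A voter closer to `p` witnesses `d(p, q) ≤ 2 d(v, q)`, and there are at least as
many of those as of the others, so the excess `d(p, q)` per other voter is covered by twice the
`q`-cost of the majority. -/

open Finset

section

variable {X : Type*} [PseudoMetricSpace X] {p q : X}

theorem dist_le_two_mul_dist_of_dist_le {v : X} (h : dist v p ≤ dist v q) :
    dist p q ≤ 2 * dist v q := by
  linarith [dist_triangle_left p q v]

theorem card_mul_dist_le_two_mul_sum_dist {S : Finset X} (hS : ∀ v ∈ S, dist v p ≤ dist v q) :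
    (#S : ℝ) * dist p q ≤ 2 * ∑ v ∈ S, dist v q := by
  rw [← nsmul_eq_mul, ← sum_const, mul_sum]
  exact sum_le_sum fun v hv => dist_le_two_mul_dist_of_dist_le (hS v hv)

theorem sum_dist_le_sum_dist_add_card_mul_dist (S : Finset X) (p q : X) :
    ∑ v ∈ S, dist v p ≤ ∑ v ∈ S, dist v q + #S * dist p q := by
  rw [← nsmul_eq_mul, ← sum_const, ← sum_add_distrib]
  exact sum_le_sum fun v _ => dist_triangle_right v p q

end

theorem Finset.card_filter_not_le_of_le_two_mul {α : Type*} (V : Finset α) (P : α → Prop)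
    [DecidablePred P] (h : (#V : ℝ) ≤ 2 * #(V.filter P)) :
    (#(V.filter fun v => ¬P v) : ℝ) ≤ #(V.filter P) := by
  have hsplit := congrArg (Nat.cast (R := ℝ)) (card_filter_add_card_filter_not (s := V) P)
  push_cast at hsplit
  linarith

/-- metric version of the distortion-3 majority lemma: if at least half the
voters are weakly closer to `p` than to `q`, then `Σ d(v,p) ≤ 3·Σ d(v,q)`. -/
theorem stmt15 {X : Type*} [MetricSpace X] (p q : X) (V : Finset X)
    (hmaj : (V.card : ℝ) ≤ 2 * ((V.filter fun v => dist v p ≤ dist v q).card : ℝ)) :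
    ∑ v ∈ V, dist v p ≤ 3 * ∑ v ∈ V, dist v q := by
  set S := V.filter fun v => dist v p ≤ dist v q
  set T := V.filter fun v => ¬dist v p ≤ dist v q
  have hS : ∀ v ∈ S, dist v p ≤ dist v q := fun v hv => (mem_filter.mp hv).2
  have hTS : (#T : ℝ) * dist p q ≤ #S * dist p q :=
    mul_le_mul_of_nonneg_right (V.card_filter_not_le_of_le_two_mul _ hmaj) dist_nonneg
  have hSV : ∑ v ∈ S, dist v q ≤ ∑ v ∈ V, dist v q :=
    sum_le_sum_of_subset_of_nonneg (filter_subset _ _) fun _ _ _ => dist_nonneg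
  calc ∑ v ∈ V, dist v p = ∑ v ∈ S, dist v p + ∑ v ∈ T, dist v p :=
        (sum_filter_add_sum_filter_not V _ _).symm
    _ ≤ ∑ v ∈ S, dist v q + (∑ v ∈ T, dist v q + #T * dist p q) :=
        add_le_add (sum_le_sum hS) (sum_dist_le_sum_dist_add_card_mul_dist T p q)
    _ ≤ ∑ v ∈ V, dist v q + 2 * ∑ v ∈ S, dist v q := by
        rw [← sum_filter_add_sum_filter_not V (fun v => dist v p ≤ dist v q)]
        linarith [card_mul_dist_le_two_mul_sum_dist hS]
    _ ≤ 3 * ∑ v ∈ V, dist v q := by linarith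
end
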